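/- arXiv:2512.16195 — 2 statements merged into one kernel-verified Lean document; each statement's English description precedes it below -/
import Mathlib

section
/- For all nonnegative integers m, r and any further multi-index w' = (t₁,…,t_j) of nonnegative integers, the Cauchy product Li⁻_m · Li⁻_{(r,t₁,…,t_j)} equals ∑_{k=0}^{m} (−1)^k C(m,k) · Li⁻_{(m−k, r+k, t₁,…,t_j)} as formal power series. -/
open PowerSeries Finset

/-- Coefficient at `z^n` of the non-positive MPL attached to an index list:
for `s = (s₁,…,s_r)` this is `∑_{n = n₁ > n₂ > ⋯ > n_r > 0} n₁^{s₁}⋯n_r^{s_r}`. -/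
def liCoeff : List ℕ → ℕ → ℚ
  | [], n => if n = 0 then 1 else 0
  | s :: t, n => if n = 0 then 0 else (n : ℚ) ^ s * ∑ m ∈ Finset.range n, liCoeff t m

/-- The non-positive multiple polylogarithm
`Li⁻_{(s₁,…,s_r)}(z) = ∑_{n₁>⋯>n_r>0} n₁^{s₁}⋯n_r^{s_r} z^{n₁} ∈ ℚ⟦z⟧`. -/
noncomputable def Li (s : List ℕ) : PowerSeries ℚ := PowerSeries.mk (liCoeff s)

lemma liCoeff_cons (s : ℕ) (t : List ℕ) (n : ℕ) :
    liCoeff (s :: t) n = if n = 0 then 0 else (n : ℚ) ^ s * ∑ m ∈ Finset.range n, liCoeff t m :=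
  rfl

lemma liCoeff_single (m a : ℕ) : liCoeff [m] a = if a = 0 then 0 else (a : ℚ) ^ m := by
  rcases Nat.eq_zero_or_pos a with h | h
  · simp [h, liCoeff]
  · have ha : a ≠ 0 := h.ne'
    rw [liCoeff_cons, if_neg ha, if_neg ha]
    have : ∑ u ∈ Finset.range a, liCoeff [] u = 1 := by
      simp [liCoeff, Finset.sum_ite_eq, Finset.mem_range, h]
    rw [this, mul_one]

lemma liCoeff_shift (r k : ℕ) (w' : List ℕ) (b : ℕ) :
    liCoeff ((r + k) :: w') b = (b : ℚ) ^ k * liCoeff (r :: w') b := by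
  rcases Nat.eq_zero_or_pos b with h | h
  · simp [h, liCoeff_cons]
  · have hb : b ≠ 0 := h.ne'
    rw [liCoeff_cons, liCoeff_cons, if_neg hb, if_neg hb, pow_add]
    ring

lemma binom_sub (x y : ℚ) (n : ℕ) :
    ∑ k ∈ Finset.range (n + 1), (-1 : ℚ) ^ k * (n.choose k : ℚ) * x ^ (n - k) * y ^ k
      = (x - y) ^ n := by
  rw [sub_pow, ← Finset.sum_range_reflect
    (fun k => (-1 : ℚ) ^ (k + n) * x ^ k * y ^ (n - k) * (n.choose k : ℚ)) (n + 1)]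
  simp only [Nat.add_sub_cancel]
  refine Finset.sum_congr rfl fun k hk => ?_
  rw [Finset.mem_range, Nat.lt_succ_iff] at hk
  have h2 : n - (n - k) = k := by omega
  rw [h2, Nat.choose_symm hk]
  have hsgn : (-1 : ℚ) ^ (n - k + n) = (-1) ^ k := by
    have he : n - k + n = k + 2 * (n - k) := by omega
    rw [he, pow_add, pow_mul, neg_one_sq, one_pow, mul_one]
  rw [hsgn]
  ring

theorem Li_mono_mul_word (m r : ℕ) (w' : List ℕ) :
    Li [m] * Li (r :: w') =
      ∑ k ∈ Finset.range (m + 1),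
        ((-1 : ℚ) ^ k * (m.choose k : ℚ)) • Li ((m - k) :: (r + k) :: w') := by
  ext n
  rw [PowerSeries.coeff_mul]
  simp only [Li, coeff_mk, map_sum, map_smul, smul_eq_mul]
  rcases Nat.eq_zero_or_pos n with hn | hn
  · subst hn
    simp [Finset.Nat.antidiagonal_zero, liCoeff_cons]
  · have hn' : n ≠ 0 := hn.ne'
    rw [Finset.Nat.sum_antidiagonal_eq_sum_range_succ
      (fun a b => liCoeff [m] a * liCoeff (r :: w') b),
      ← Finset.sum_range_reflect, Finset.sum_range_succ]
    simp only [Nat.succ_sub_one, Nat.sub_self]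
    have h0 : liCoeff [m] 0 = 0 := by simp [liCoeff_single]
    rw [h0, zero_mul, add_zero]
    calc ∑ j ∈ Finset.range n, liCoeff [m] (n - j) * liCoeff (r :: w') (n - (n - j))
        = ∑ b ∈ Finset.range n, ((n : ℚ) - b) ^ m * liCoeff (r :: w') b := by
          refine Finset.sum_congr rfl fun b hb => ?_
          rw [Finset.mem_range] at hb
          have h1 : n - (n - b) = b := by omega
          have h2 : n - b ≠ 0 := by omega
          rw [h1, liCoeff_single, if_neg h2, Nat.cast_sub hb.le]
      _ = ∑ b ∈ Finset.range n, ∑ k ∈ Finset.range (m + 1),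
            (-1 : ℚ) ^ k * (m.choose k : ℚ) * ((n : ℚ) ^ (m - k) *
              ((b : ℚ) ^ k * liCoeff (r :: w') b)) := by
          refine Finset.sum_congr rfl fun b hb => ?_
          rw [← binom_sub (n : ℚ) (b : ℚ) m, Finset.sum_mul]
          exact Finset.sum_congr rfl fun k _ => by ring
      _ = ∑ k ∈ Finset.range (m + 1), ∑ b ∈ Finset.range n,
            (-1 : ℚ) ^ k * (m.choose k : ℚ) * ((n : ℚ) ^ (m - k) *
              ((b : ℚ) ^ k * liCoeff (r :: w') b)) := Finset.sum_comm
      _ = _ := by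
          refine Finset.sum_congr rfl fun k hk => ?_
          rw [liCoeff_cons, if_neg hn']
          simp only [liCoeff_shift, Finset.mul_sum]
end

section
/- For every multi-index k = (k₁,…,k_{r−1}; k_r) of nonnegative integers and every permutation σ of {1,…,r}, the element π((M^{(k)} − M^{(σ(k))})x₁) lies in the kernel of the linear map Li⁻_•; equivalently, Li⁻ applied to the expansion of M^{(k)}x₁ equals Li⁻ applied to the expansion of M^{(σ(k))}x₁, where σ(k) := (k_{σ(1)},…,k_{σ(r−1)}; k_{σ(r)}). -/
open PowerSeries Finset

/-- `x₁^{(m)}`: iterated Lie bracket in `ℚ⟨x₀,x₁⟩`. -/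
def lieX : ℕ → FreeAlgebra ℚ (Fin 2)
  | 0 => FreeAlgebra.ι ℚ 1
  | m + 1 => FreeAlgebra.ι ℚ 0 * lieX m - lieX m * FreeAlgebra.ι ℚ 0

/-- The Magnus polynomial `M^{(k₁,…,k_r;k_∞)} = x₁^{(k₁)}⋯x₁^{(k_r)}x₀^{k_∞)`,
where the tuple has `r+1` entries, the last one playing the role of `k_∞`. -/
def magnus {r : ℕ} (k : Fin (r + 1) → ℕ) : FreeAlgebra ℚ (Fin 2) :=
  ((List.finRange r).map fun j => lieX (k j.castSucc)).prod *
    FreeAlgebra.ι ℚ 0 ^ (k (Fin.last r))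

/-- Decode a word `x₀^{a₁}x₁⋯x₀^{a_j}x₁` in `{x₀,x₁}*` into the
multi-index `(a₁,…,a_j)`. -/
def decode : List (Fin 2) → List ℕ
  | [] => []
  | a :: t =>
      if a = 1 then 0 :: decode t
      else
        match decode t with
        | [] => []
        | b :: rest => (b + 1) :: rest

/-- The composite `Li⁻_• ∘ π : ℚ⟨x₀,x₁⟩x₁ → ℚ⟦z⟧`, expanding an element of the
free algebra in the monomial (word) basis and applying `Li⁻` to each decoded word. -/
noncomputable def LiPi (a : FreeAlgebra ℚ (Fin 2)) : PowerSeries ℚ :=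
  (FreeAlgebra.equivMonoidAlgebraFreeMonoid a).coeff.sum
    fun w c => c • Li (decode (FreeMonoid.toList w))

/-!
`Li⁻_• ∘ π` intertwines left multiplication on the right ideal `ℚ⟨x₀,x₁⟩x₁` with the
representation `ρ` of `ℚ⟨x₀,x₁⟩` on `ℚ⟦z⟧` sending `x₀` to `θ = z d/dz` and `x₁` to multiplication
by `Li⁻_{(0)} = z/(1-z)`. As `θ` is a derivation, `ρ(x₁^{(m)}) = [θ, ρ(x₁^{(m-1)})]` is
multiplication by `θ^m Li⁻_{(0)} = Li⁻_{(m)}`, and hence `Li⁻_•(π(M^{(k)}x₁)) = ∏ᵢ Li⁻_{(kᵢ)}`,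
which is symmetric in `k`.
-/

open FreeAlgebra Module

section Theta

variable (R : Type*) [CommSemiring R]

noncomputable def theta : Derivation R R⟦X⟧ R⟦X⟧ := (X : R⟦X⟧) • d⁄dX R

variable {R}

theorem coeff_theta (f : R⟦X⟧) (n : ℕ) : coeff n (theta R f) = n * coeff n f := by
  rcases n with _ | n
  · simp [theta]
  · simp [theta, Derivation.smul_apply, coeff_succ_X_mul, coeff_derivative, mul_comm]

end Theta

theorem Derivation.commutator_mulLeft {R A : Type*} [CommSemiring R] [CommRing A] [Algebra R A]
    (D : Derivation R A A) (a : A) :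
    (D : End R A) * LinearMap.mulLeft R a - LinearMap.mulLeft R a * D =
      LinearMap.mulLeft R (D a) := by
  ext f
  simp [Derivation.leibniz]
  ring

theorem FreeAlgebra.basisFreeMonoid_apply (R X : Type*) [CommSemiring R] (w : FreeMonoid X) :
    basisFreeMonoid R X w = FreeMonoid.lift (ι R) w := by
  simp [basisFreeMonoid, equivMonoidAlgebraFreeMonoid]

theorem Li_nil : Li [] = 1 := by
  ext n
  simp [Li, liCoeff, coeff_one]

theorem coeff_Li_cons (s : ℕ) (t : List ℕ) (n : ℕ) :
    coeff n (Li (s :: t)) = (n : ℚ) ^ s * ∑ m ∈ range n, coeff m (Li t) := by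
  rcases n with _ | n <;> simp [Li, liCoeff]

theorem coeff_Li_singleton (s n : ℕ) : coeff n (Li [s]) = if n = 0 then 0 else (n : ℚ) ^ s := by
  rcases n with _ | n <;> simp [coeff_Li_cons, Li_nil, coeff_one]

theorem Li_zero_cons (t : List ℕ) : Li (0 :: t) = Li [0] * Li t := by
  ext n
  rw [mul_comm, coeff_mul,
    Nat.sum_antidiagonal_eq_sum_range_succ (fun i j => coeff i (Li t) * coeff j (Li [0])),
    sum_range_succ]
  simp only [coeff_Li_singleton, pow_zero]
  rw [coeff_Li_cons, pow_zero, one_mul, if_pos (Nat.sub_self n), mul_zero, add_zero]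
  refine sum_congr rfl fun m hm => ?_
  rw [if_neg (Nat.sub_ne_zero_of_lt (mem_range.mp hm)), mul_one]

theorem Li_succ_cons (s : ℕ) (t : List ℕ) : Li ((s + 1) :: t) = theta ℚ (Li (s :: t)) := by
  ext n
  rw [coeff_theta, coeff_Li_cons, coeff_Li_cons, pow_succ]
  ring

theorem theta_pow_Li_singleton (m p : ℕ) :
    ((theta ℚ : End ℚ ℚ⟦X⟧) ^ p) (Li [m]) = Li [m + p] := by
  induction p with
  | zero => rfl
  | succ p ih =>
    rw [pow_succ', End.mul_apply, ih]
    exact (Li_succ_cons (m + p) []).symm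

theorem decode_append_one_ne_nil : ∀ l : List (Fin 2), decode (l ++ [1]) ≠ []
  | [] => by simp [decode]
  | a :: l => by
    obtain ⟨b, rest, h⟩ := List.exists_cons_of_ne_nil (decode_append_one_ne_nil l)
    fin_cases a <;> simp [decode, h]

-- `decode` discards a trailing block of `x₀`s, so `x₀` acts as `θ` only on words ending in `x₁`.
theorem Li_decode_zero_cons {l : List (Fin 2)} (hl : decode l ≠ []) :
    Li (decode (0 :: l)) = theta ℚ (Li (decode l)) := by
  obtain ⟨b, rest, h⟩ := List.exists_cons_of_ne_nil hl
  simp [decode, h, Li_succ_cons]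

noncomputable def liRep : FreeAlgebra ℚ (Fin 2) →ₐ[ℚ] End ℚ ℚ⟦X⟧ :=
  lift ℚ ![(theta ℚ : End ℚ ℚ⟦X⟧), LinearMap.mulLeft ℚ (Li [0])]

theorem liRep_ι_zero : liRep (ι ℚ 0) = theta ℚ := by simp [liRep]

theorem liRep_ι_one : liRep (ι ℚ 1) = LinearMap.mulLeft ℚ (Li [0]) := by simp [liRep]

theorem liRep_lieX (m : ℕ) : liRep (lieX m) = LinearMap.mulLeft ℚ (Li [m]) := by
  induction m with
  | zero => exact liRep_ι_one
  | succ m ih =>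
    rw [lieX, map_sub, map_mul, map_mul, ih, liRep_ι_zero, Derivation.commutator_mulLeft,
      Li_succ_cons]

noncomputable def liPiLinear : FreeAlgebra ℚ (Fin 2) →ₗ[ℚ] ℚ⟦X⟧ :=
  (basisFreeMonoid ℚ (Fin 2)).constr ℚ fun w => Li (decode w.toList)

theorem liPiLinear_apply (a : FreeAlgebra ℚ (Fin 2)) : liPiLinear a = LiPi a := by
  rw [liPiLinear, Basis.constr_apply]
  rfl

theorem LiPi_basisFreeMonoid (w : FreeMonoid (Fin 2)) :
    LiPi (basisFreeMonoid ℚ (Fin 2) w) = Li (decode w.toList) := by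
  rw [← liPiLinear_apply, liPiLinear, Basis.constr_basis]

theorem Li_decode_cons_append_one (i : Fin 2) (l : List (Fin 2)) :
    Li (decode (i :: (l ++ [1]))) = liRep (ι ℚ i) (Li (decode (l ++ [1]))) := by
  rcases Fin.exists_fin_two.mp ⟨i, rfl⟩ with rfl | rfl
  · rw [liRep_ι_zero]
    exact Li_decode_zero_cons (decode_append_one_ne_nil l)
  · rw [liRep_ι_one, LinearMap.mulLeft_apply]
    exact Li_zero_cons _

theorem LiPi_ι_mul_mul_ι_one (i : Fin 2) (x : FreeAlgebra ℚ (Fin 2)) :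
    LiPi (ι ℚ i * x * ι ℚ 1) = liRep (ι ℚ i) (LiPi (x * ι ℚ 1)) := by
  simp only [← liPiLinear_apply]
  suffices h : liPiLinear ∘ₗ LinearMap.mulRight ℚ (ι ℚ 1) ∘ₗ LinearMap.mulLeft ℚ (ι ℚ i) =
      liRep (ι ℚ i) ∘ₗ liPiLinear ∘ₗ LinearMap.mulRight ℚ (ι ℚ 1) from LinearMap.congr_fun h x
  refine (basisFreeMonoid ℚ (Fin 2)).ext fun w => ?_
  have hw : ι ℚ i * basisFreeMonoid ℚ (Fin 2) w * ι ℚ 1 =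
      basisFreeMonoid ℚ (Fin 2) (FreeMonoid.of i * w * FreeMonoid.of 1) := by
    simp [basisFreeMonoid_apply]
  have hw' : basisFreeMonoid ℚ (Fin 2) w * ι ℚ 1 =
      basisFreeMonoid ℚ (Fin 2) (w * FreeMonoid.of 1) := by
    simp [basisFreeMonoid_apply]
  simp only [LinearMap.comp_apply, LinearMap.mulLeft_apply, LinearMap.mulRight_apply, hw, hw',
    liPiLinear_apply, LiPi_basisFreeMonoid, FreeMonoid.toList_mul, FreeMonoid.toList_of]
  exact Li_decode_cons_append_one i _

theorem LiPi_mul_mul_ι_one (a x : FreeAlgebra ℚ (Fin 2)) :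
    LiPi (a * x * ι ℚ 1) = liRep a (LiPi (x * ι ℚ 1)) := by
  induction a generalizing x with
  | grade0 c =>
    rw [mul_assoc, ← liPiLinear_apply, ← liPiLinear_apply, ← Algebra.smul_def, map_smul,
      AlgHom.commutes, algebraMap_end_apply]
  | grade1 i => exact LiPi_ι_mul_mul_ι_one i x
  | mul a b ha hb => rw [mul_assoc a, ha, hb, map_mul, End.mul_apply]
  | add a b ha hb =>
    rw [add_mul, add_mul, ← liPiLinear_apply, map_add, liPiLinear_apply, liPiLinear_apply, ha, hb,
      map_add, LinearMap.add_apply]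

theorem LiPi_ι_one : LiPi (ι ℚ 1) = Li [0] := by
  have h := LiPi_basisFreeMonoid (FreeMonoid.of 1)
  rwa [basisFreeMonoid_apply, FreeMonoid.lift_eval_of] at h

theorem LiPi_magnus_mul_ι_one {r : ℕ} (k : Fin (r + 1) → ℕ) :
    LiPi (magnus k * ι ℚ 1) = ∏ i, Li [k i] := by
  rw [← one_mul (ι ℚ 1), ← mul_assoc, LiPi_mul_mul_ι_one, one_mul, LiPi_ι_one, magnus, map_mul,
    map_pow, End.mul_apply, liRep_ι_zero, theta_pow_Li_singleton, zero_add, map_list_prod,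
    List.map_map]
  have h : liRep ∘ (fun j : Fin r => lieX (k j.castSucc)) =
      Algebra.lmul ℚ ℚ⟦X⟧ ∘ fun j => Li [k j.castSucc] := funext fun j => liRep_lieX _
  rw [h, ← List.map_map, ← map_list_prod, Algebra.coe_lmul_eq_mul, LinearMap.mul_apply',
    Fin.prod_univ_castSucc, Fin.prod_univ_def]

/-- Permuting the entries of the index of a Magnus polynomial does not change
the image under `Li⁻_• ∘ π`: the difference lies in the kernel. -/
theorem magnus_perm_mem_ker (r : ℕ) (k : Fin (r + 1) → ℕ)
    (σ : Equiv.Perm (Fin (r + 1))) :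
    LiPi ((magnus k - magnus (k ∘ σ)) * FreeAlgebra.ι ℚ 1) = 0 := by
  rw [sub_mul, ← liPiLinear_apply, map_sub, liPiLinear_apply, liPiLinear_apply,
    LiPi_magnus_mul_ι_one, LiPi_magnus_mul_ι_one, Function.comp_def,
    Equiv.prod_comp σ fun i => Li [k i], sub_self]
end
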